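/- Assume that ∑_i b i • F i U lies in the linear span of {X̄ k : k ∈ Fin p}, and let ℓ : H_x →ₗ ℝ be a linear functional (modeling integration over the spatial domain) with ℓ (F i U) = 0 for every i (the global zero-mean property of the continuous model). Then global conservation holds: ℓ (φ(S¹)) = ℓ (φ(S⁰)). -/
import Mathlib


open RealInnerProductSpace

lemma expand_in_span {Hx : Type*} [NormedAddCommGroup Hx] [InnerProductSpace ℝ Hx]
    {p : ℕ} (Xbar : Fin p → Hx)
    (hX : ∀ i j, ⟪Xbar i, Xbar j⟫ = if i = j then 1 else 0)
    (v : Hx) (hv : v ∈ Submodule.span ℝ (Set.range Xbar)) :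
    ∑ k, ⟪v, Xbar k⟫ • Xbar k = v := by
  induction hv using Submodule.span_induction with
  | mem x hx =>
      obtain ⟨j, rfl⟩ := hx
      simp [hX, ite_smul]
  | zero => simp
  | add x y _ _ hx hy =>
      simp only [inner_add_left, add_smul, Finset.sum_add_distrib, hx, hy]
  | smul a x _ hx =>
      simp only [real_inner_smul_left, mul_smul, ← Finset.smul_sum, hx]

/-- With the basis augmentation and a linear functional `ℓ`
(modeling integration over the spatial domain) annihilating each flux stage
`F i U`, the conserved quantity is globally conserved over an S-step. -/
theorem sStep_global_conservation
    {Hx Hv : Type*} [NormedAddCommGroup Hx] [InnerProductSpace ℝ Hx]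
    [NormedAddCommGroup Hv] [InnerProductSpace ℝ Hv]
    {p q s : ℕ} (Xbar : Fin p → Hx) (Vhat : Fin q → Hv)
    (hX : ∀ i j, ⟪Xbar i, Xbar j⟫ = if i = j then 1 else 0)
    (hV : ∀ i j, ⟪Vhat i, Vhat j⟫ = if i = j then 1 else 0)
    (U : Hv) (hU : U = ∑ l, ⟪U, Vhat l⟫ • Vhat l)
    (F : Fin s → Hv →ₗ[ℝ] Hx) (b : Fin s → ℝ) (Δt : ℝ)
    (S0 S1 : Fin p → Fin q → ℝ)
    (hS : ∀ k l, S1 k l = S0 k l + Δt * ∑ i, b i * ⟪F i (Vhat l), Xbar k⟫)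
    (φ : (Fin p → Fin q → ℝ) → Hx)
    (hφ : ∀ S, φ S = ∑ k, ∑ l, (⟪Vhat l, U⟫ * S k l) • Xbar k)
    (hflux : (∑ i, b i • F i U) ∈ Submodule.span ℝ (Set.range Xbar))
    (ℓ : Hx →ₗ[ℝ] ℝ) (hℓ : ∀ i, ℓ (F i U) = 0) :
    ℓ (φ S1) = ℓ (φ S0) := by
  set G : Hx := ∑ i, b i • F i U with hG
  have key : ∀ k, (∑ l, (⟪Vhat l, U⟫ * (Δt * ∑ i, b i * ⟪F i (Vhat l), Xbar k⟫))) = Δt * ⟪G, Xbar k⟫ := by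
    intro k
    have hFU : ∀ i : Fin s, ⟪F i U, Xbar k⟫ = ∑ l, ⟪U, Vhat l⟫ * ⟪F i (Vhat l), Xbar k⟫ := by
      intro i
      conv_lhs => rw [hU]
      rw [map_sum, sum_inner]
      simp [real_inner_smul_left]
    rw [hG, sum_inner]
    simp only [real_inner_smul_left, hFU, Finset.mul_sum]
    rw [Finset.sum_comm]
    refine Finset.sum_congr rfl fun l _ => Finset.sum_congr rfl fun i _ => ?_
    rw [real_inner_comm]
    ring
  have hstep : φ S1 = φ S0 + Δt • G := by
    rw [hφ, hφ]
    have hGspan := expand_in_span Xbar hX G hflux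
    calc ∑ k, ∑ l, (⟪Vhat l, U⟫ * S1 k l) • Xbar k
        = ∑ k, ∑ l, ((⟪Vhat l, U⟫ * S0 k l) • Xbar k
            + (⟪Vhat l, U⟫ * (Δt * ∑ i, b i * ⟪F i (Vhat l), Xbar k⟫)) • Xbar k) := by
          refine Finset.sum_congr rfl fun k _ => Finset.sum_congr rfl fun l _ => ?_
          rw [hS, mul_add, add_smul]
      _ = (∑ k, ∑ l, (⟪Vhat l, U⟫ * S0 k l) • Xbar k)
            + ∑ k, (∑ l, (⟪Vhat l, U⟫ * (Δt * ∑ i, b i * ⟪F i (Vhat l), Xbar k⟫))) • Xbar k := by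
          rw [← Finset.sum_add_distrib]
          refine Finset.sum_congr rfl fun k _ => ?_
          rw [Finset.sum_add_distrib, Finset.sum_smul]
      _ = (∑ k, ∑ l, (⟪Vhat l, U⟫ * S0 k l) • Xbar k) + Δt • G := by
          congr 1
          simp only [key, mul_smul, ← Finset.smul_sum, hGspan]
  rw [hstep, map_add, map_smul]
  have : ℓ G = 0 := by
    rw [hG, map_sum]
    simp [map_smul, hℓ]
  simp [this]
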